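/- For n ≥ 3, the connected domination number of the crown graph C_{n,n} equals 4; in particular, {1, 2, 4, 5} is a connected dominating set of minimum size, and no set of at most 3 vertices is a connected dominating set. -/

import Mathlib

open SimpleGraph

/-- The crown graph `C_{n,n}`: vertices `Fin (2*n)`, where index `2i-2` plays the role of the
odd-labelled vertex `2i-1` of the paper and index `2i-1` the even-labelled vertex `2i`.
An even index `u` and an odd index `v` are adjacent iff `v ≠ u + 1`. -/
def crownGraph (n : ℕ) : SimpleGraph (Fin (2 * n)) where
  Adj u v := (u.val % 2 = 0 ∧ v.val % 2 = 1 ∧ v.val ≠ u.val + 1) ∨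
             (v.val % 2 = 0 ∧ u.val % 2 = 1 ∧ u.val ≠ v.val + 1)
  symm := by constructor; intro u v h; tauto
  loopless := by constructor; intro u h; rcases h with ⟨h1, h2, _⟩ | ⟨h1, h2, _⟩ <;> omega

/-- The part `X` (odd-labelled vertices of the paper): even indices. -/
def crownX (n : ℕ) : Finset (Fin (2 * n)) := Finset.univ.filter (fun u => u.val % 2 = 0)

/-- The part `Y` (even-labelled vertices of the paper): odd indices. -/
def crownY (n : ℕ) : Finset (Fin (2 * n)) := Finset.univ.filter (fun u => u.val % 2 = 1)

/-- `D` is a dominating set of `G`. -/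
def IsDominatingSet {V : Type*} (G : SimpleGraph V) (D : Finset V) : Prop :=
  ∀ v, v ∉ D → ∃ u ∈ D, G.Adj u v

/-- `D` is a connected dominating set of `G`. -/
def IsConnectedDominatingSet {V : Type*} (G : SimpleGraph V) (D : Finset V) : Prop :=
  IsDominatingSet G D ∧ (G.induce (↑D : Set V)).Connected

/-- The connected domination number of `G`. -/
noncomputable def connectedDominationNumber {V : Type*} (G : SimpleGraph V) : ℕ :=
  sInf { k | ∃ D : Finset V, D.card = k ∧ IsConnectedDominatingSet G D }

/-!
The crown graph is `K_{n,n}` minus the perfect matching `v ↔ Crown.partner v`. If a connected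
dominating set `D` contains a vertex `v` that is alone on its side, the partner of `v` can only
be dominated from inside `D`, yet it has no neighbour in `D` at all, so connectivity forces `D`
to be that single vertex. A connected set of at most three vertices has such a lone vertex,
while the path `0 - 3 - 4 - 1` dominates every vertex on both sides.
-/
lemma exists_adj_mem_of_preconnected_induce {V : Type*} {G : SimpleGraph V} {s : Set V}
    (hs : (G.induce s).Preconnected) {v w : V} (hv : v ∈ s) (hw : w ∈ s) (hne : v ≠ w) :
    ∃ u ∈ s, G.Adj v u := by
  have : Nontrivial s := ⟨⟨v, hv⟩, ⟨w, hw⟩, by simpa using hne⟩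
  obtain ⟨u, hu⟩ := hs.exists_adj_of_nontrivial ⟨v, hv⟩
  exact ⟨u, u.2, hu⟩

lemma connectedDominationNumber_eq_card {V : Type*} {G : SimpleGraph V} {D : Finset V}
    (hD : IsConnectedDominatingSet G D)
    (hmin : ∀ D', IsConnectedDominatingSet G D' → D.card ≤ D'.card) :
    connectedDominationNumber G = D.card :=
  IsLeast.csInf_eq ⟨⟨D, rfl, hD⟩, by rintro _ ⟨D', rfl, hD'⟩; exact hmin D' hD'⟩

namespace Crown

variable {n : ℕ}

def partner (v : Fin (2 * n)) : Fin (2 * n) :=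
  ⟨if v.val % 2 = 0 then v.val + 1 else v.val - 1, by split_ifs <;> omega⟩

lemma partner_val_mod_two_ne (v : Fin (2 * n)) : (partner v).val % 2 ≠ v.val % 2 := by
  unfold partner; split_ifs <;> simp only <;> omega

lemma adj_iff {u v : Fin (2 * n)} :
    (crownGraph n).Adj u v ↔ u.val % 2 ≠ v.val % 2 ∧ v ≠ partner u := by
  simp only [crownGraph, partner, ne_eq, Fin.ext_iff]
  split_ifs <;> omega

lemma not_isConnectedDominatingSet_of_lone_vertex {D : Finset (Fin (2 * n))} {v : Fin (2 * n)}
    (hv : v ∈ D) (huniq : ∀ u ∈ D, u.val % 2 = v.val % 2 → u = v) :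
    ¬ IsConnectedDominatingSet (crownGraph n) D := by
  rintro ⟨hdom, hconn⟩
  have hside {u : Fin (2 * n)} (hu : u ∈ D) (hpar : u.val % 2 ≠ (partner v).val % 2) : u = v :=
    huniq u hu (by have := partner_val_mod_two_ne v; omega)
  have hpD : partner v ∈ D := by
    by_contra hpD
    obtain ⟨u, hu, hadj⟩ := hdom _ hpD
    obtain ⟨hpar, hne⟩ := adj_iff.mp hadj
    exact hne (congrArg partner (hside hu hpar).symm)
  obtain ⟨u, hu, hadj⟩ := exists_adj_mem_of_preconnected_induce hconn.preconnected hpD hv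
    (fun h => partner_val_mod_two_ne v (by rw [h]))
  obtain rfl := hside hu (adj_iff.mp hadj).1.symm
  exact (adj_iff.mp hadj.symm).2 rfl

lemma exists_lone_vertex_of_card_le_three {D : Finset (Fin (2 * n))}
    (hconn : ((crownGraph n).induce (D : Set (Fin (2 * n)))).Connected) (hcard : D.card ≤ 3) :
    ∃ v ∈ D, ∀ u ∈ D, u.val % 2 = v.val % 2 → u = v := by
  obtain ⟨⟨v, hv⟩⟩ := hconn.nonempty
  by_cases hboth : ∃ w ∈ D, w.val % 2 ≠ v.val % 2
  · obtain ⟨w, hw, hwv⟩ := hboth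
    have hsplit := D.card_filter_add_card_filter_not (fun u => u.val % 2 = v.val % 2)
    rcases le_or_gt (D.filter (fun u => u.val % 2 = v.val % 2)).card 1 with hle | hgt
    · refine ⟨v, hv, fun u hu hu' => Finset.card_le_one.mp hle u ?_ v ?_⟩ <;> simp_all
    · have hle : (D.filter (fun u => ¬ u.val % 2 = v.val % 2)).card ≤ 1 := by omega
      refine ⟨w, hw, fun u hu hu' => Finset.card_le_one.mp hle u ?_ w ?_⟩ <;> simp_all
  · push Not at hboth
    refine ⟨v, hv, fun u hu _ => ?_⟩
    by_contra hne
    obtain ⟨x, hx, hadj⟩ :=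
      exists_adj_mem_of_preconnected_induce hconn.preconnected hv hu (Ne.symm hne)
    exact (adj_iff.mp hadj).1 (hboth x hx).symm

lemma not_isConnectedDominatingSet_of_card_le_three {D : Finset (Fin (2 * n))}
    (hcard : D.card ≤ 3) : ¬ IsConnectedDominatingSet (crownGraph n) D := fun hD =>
  let ⟨_, hv, huniq⟩ := exists_lone_vertex_of_card_le_three hD.2 hcard
  not_isConnectedDominatingSet_of_lone_vertex hv huniq hD

lemma isDominatingSet_of_two_per_side {D : Finset (Fin (2 * n))} {x x' y y' : Fin (2 * n)}
    (hx : x ∈ D) (hx' : x' ∈ D) (hy : y ∈ D) (hy' : y' ∈ D) (hxx' : x ≠ x') (hyy' : y ≠ y')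
    (hpx : x.val % 2 = x'.val % 2) (hpy : y.val % 2 = y'.val % 2)
    (hpxy : x.val % 2 ≠ y.val % 2) :
    IsDominatingSet (crownGraph n) D := by
  have hpick {v a b : Fin (2 * n)} (ha : a ∈ D) (hb : b ∈ D) (hab : a ≠ b)
      (hpar : v.val % 2 ≠ a.val % 2) (hpar' : v.val % 2 ≠ b.val % 2) :
      ∃ u ∈ D, (crownGraph n).Adj u v := by
    by_cases hpa : a = partner v
    · exact ⟨b, hb, (adj_iff.mpr ⟨hpar', fun h => hab (hpa.trans h.symm)⟩).symm⟩
    · exact ⟨a, ha, (adj_iff.mpr ⟨hpar, hpa⟩).symm⟩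
  intro v _
  by_cases hv : v.val % 2 = x.val % 2
  · exact hpick hy hy' hyy' (by omega) (by omega)
  · exact hpick hx hx' hxx' hv (by omega)

lemma isConnectedDominatingSet_of_path {x x' y y' : Fin (2 * n)}
    (h₁ : (crownGraph n).Adj x y') (h₂ : (crownGraph n).Adj y' x')
    (h₃ : (crownGraph n).Adj x' y) (hxx' : x ≠ x') (hyy' : y ≠ y') :
    IsConnectedDominatingSet (crownGraph n) {x, y, y', x'} := by
  have hp₁ := (adj_iff.mp h₁).1
  have hp₂ := (adj_iff.mp h₂).1
  have hp₃ := (adj_iff.mp h₃).1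
  refine ⟨isDominatingSet_of_two_per_side (by simp) (by simp) (by simp) (by simp) hxx' hyy'
    (by omega) (by omega) (by omega), ?_⟩
  let walk := Walk.cons h₁ (Walk.cons h₂ (Walk.cons h₃ Walk.nil))
  have hsupport : (({x, y, y', x'} : Finset (Fin (2 * n))) : Set (Fin (2 * n))) =
      {v | v ∈ walk.support} := by
    ext v
    simp only [walk, Finset.coe_insert, Finset.coe_singleton, Set.mem_insert_iff,
      Set.mem_singleton_iff, Walk.support_cons, Walk.support_nil, List.mem_cons,
      List.not_mem_nil, or_false, Set.mem_ofPred_eq]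
    tauto
  rw [hsupport]
  exact walk.connected_induce_support

end Crown

/-- The connected domination number of the crown graph is `4`; the set corresponding to the
paper's vertices `{1, 2, 4, 5}` (indices `0, 1, 3, 4`) is a connected dominating set, and no
set of at most `3` vertices is a connected dominating set. -/
theorem crown_connectedDominationNumber (n : ℕ) (hn : 3 ≤ n) :
    connectedDominationNumber (crownGraph n) = 4 ∧
    IsConnectedDominatingSet (crownGraph n)
      ({⟨0, by omega⟩, ⟨1, by omega⟩, ⟨3, by omega⟩, ⟨4, by omega⟩} : Finset (Fin (2 * n))) ∧
    ∀ D : Finset (Fin (2 * n)), D.card ≤ 3 → ¬ IsConnectedDominatingSet (crownGraph n) D := by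
  have hD : IsConnectedDominatingSet (crownGraph n)
      ({⟨0, by omega⟩, ⟨1, by omega⟩, ⟨3, by omega⟩, ⟨4, by omega⟩} : Finset (Fin (2 * n))) :=
    Crown.isConnectedDominatingSet_of_path (by simp [crownGraph]) (by simp [crownGraph])
      (by simp [crownGraph]) (by simp [Fin.ext_iff]) (by simp [Fin.ext_iff])
  have hcard : ({⟨0, by omega⟩, ⟨1, by omega⟩, ⟨3, by omega⟩, ⟨4, by omega⟩} :
      Finset (Fin (2 * n))).card = 4 := by
    simp [Finset.card_insert_of_notMem, Fin.ext_iff]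
  refine ⟨?_, hD, fun D => Crown.not_isConnectedDominatingSet_of_card_le_three⟩
  rw [← hcard]
  refine connectedDominationNumber_eq_card hD fun D' hD' => ?_
  by_contra hlt
  exact Crown.not_isConnectedDominatingSet_of_card_le_three (by omega) hD'
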